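/- Let M, L be independent uniform random variables on Z_2, and let Y_1 = L, Y_2 = M + L, Y_3 = LM, Y_4 = LM + M (arithmetic in Z_2). Then the mutual informations I(M; Y_1, Y_3), I(M; Y_1, Y_4), I(M; Y_2, Y_3), and I(M; Y_2, Y_4) all equal 1/2 (in bits). -/

import Mathlib

open Finset

/-- Shannon entropy (base 2) of a finite random variable `f` on a finite probability
space with mass function `p`. -/
noncomputable def ent {Ω α : Type*} [Fintype Ω] [Fintype α] [DecidableEq α]
    (p : Ω → ℝ) (f : Ω → α) : ℝ :=
  ∑ a : α, -((∑ ω : Ω, if f ω = a then p ω else 0) *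
    Real.logb 2 (∑ ω : Ω, if f ω = a then p ω else 0))

/-- Shannon mutual information (base 2) `I(f; g) = H(f) + H(g) - H(f,g)`. -/
noncomputable def mutInfo {Ω α β : Type*} [Fintype Ω] [Fintype α] [Fintype β]
    [DecidableEq α] [DecidableEq β] (p : Ω → ℝ) (f : Ω → α) (g : Ω → β) : ℝ :=
  ent p f + ent p g - ent p (fun ω => (f ω, g ω))

/-!
Under the uniform law an entropy depends only on the fibre sizes of the random variable.
`M` has fibres of size `2, 2`, so `H(M) = 1`; each `Y = (Y_i, Y_j)` identifies exactly one pair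
of outcomes (fibres `2, 1, 1, 0`), so `H(Y) = 3/2`; and `(M, Y)` determines `L`, so `H(M, Y) = 2`.
Hence `I(M; Y) = 1 + 3/2 - 2 = 1/2`.
-/

section Entropy

variable {Ω α : Type*} [Fintype Ω] [Fintype α] [DecidableEq α]

def fiberCards (f : Ω → α) : Multiset ℕ :=
  univ.val.map fun a => #{ω | f ω = a}

theorem ent_const (c : ℝ) (f : Ω → α) :
    ent (fun _ => c) f = ((fiberCards f).map fun k : ℕ => -(k * c * Real.logb 2 (k * c))).sum := by
  simp only [ent, fiberCards, Multiset.map_map, Function.comp_def, ← Finset.sum_eq_multiset_sum,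
    Finset.sum_ite, Finset.sum_const_zero, add_zero, Finset.sum_const, nsmul_eq_mul]

end Entropy

theorem Real.logb_two_half : Real.logb 2 (1 / 2) = -1 := by
  rw [one_div, Real.logb_inv, Real.logb_self_eq_one one_lt_two]

theorem Real.logb_two_quarter : Real.logb 2 (1 / 4) = -2 := by
  rw [one_div, Real.logb_inv, show (4 : ℝ) = 2 ^ 2 by norm_num, Real.logb_pow,
    Real.logb_self_eq_one one_lt_two]
  norm_num

theorem mutInfo_quarter_eq_half {Y : ZMod 2 × ZMod 2 → ZMod 2 × ZMod 2}
    (hY : fiberCards Y = {2, 1, 1, 0})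
    (hMY : fiberCards (fun ω => (ω.1, Y ω)) = {1, 1, 1, 1, 0, 0, 0, 0}) :
    mutInfo (fun _ : ZMod 2 × ZMod 2 => (1 : ℝ) / 4) (fun ω => ω.1) Y = 1 / 2 := by
  have hM : fiberCards (fun ω : ZMod 2 × ZMod 2 => ω.1) = {2, 2} := by decide
  rw [mutInfo, ent_const, ent_const, ent_const, hM, hY, hMY]
  norm_num [Real.logb_two_half, Real.logb_two_quarter]

/-- For `(M, L)` uniform on `Z_2 × Z_2`, with `Y₁ = L`, `Y₂ = M + L`, `Y₃ = LM`,
`Y₄ = LM + M`, all four leakages `I(M; Y_i, Y_j)` (`i ∈ {1,2}`, `j ∈ {3,4}`) equal `1/2`. -/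
theorem standard_nonlinear_code_leakage :
    mutInfo (fun _ : ZMod 2 × ZMod 2 => (1 : ℝ)/4) (fun ω => ω.1)
      (fun ω => (ω.2, ω.2 * ω.1)) = 1/2 ∧
    mutInfo (fun _ : ZMod 2 × ZMod 2 => (1 : ℝ)/4) (fun ω => ω.1)
      (fun ω => (ω.2, ω.2 * ω.1 + ω.1)) = 1/2 ∧
    mutInfo (fun _ : ZMod 2 × ZMod 2 => (1 : ℝ)/4) (fun ω => ω.1)
      (fun ω => (ω.1 + ω.2, ω.2 * ω.1)) = 1/2 ∧
    mutInfo (fun _ : ZMod 2 × ZMod 2 => (1 : ℝ)/4) (fun ω => ω.1)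
      (fun ω => (ω.1 + ω.2, ω.2 * ω.1 + ω.1)) = 1/2 := by
  refine ⟨?_, ?_, ?_, ?_⟩ <;> exact mutInfo_quarter_eq_half (by decide) (by decide)
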